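/- For all natural n ≥ 1, ỹ_n ≤ c and ỹ_{n+1} ∈ [c/2, (5c-2)/2]. -/

import Mathlib

noncomputable def c : ℝ := 4 / (9 - Real.sqrt 5)
noncomputable def φ : ℝ := (1 + Real.sqrt 5) / 2

/-
With ψ = (1 - √5)/2 = -φ⁻¹, the increment c (-1)ⁿ φ^(1-n) / 2 equals (c/2)(1 - ψ) ψⁿ, so the
sequence telescopes to the closed form ỹₙ = c + (c/2)(ψ - ψⁿ). Since -1 < ψ < 0, the powers ψᵐ
with m ≥ 2 lie between ψ³ and ψ², and ψⁿ ≥ ψ for n ≥ 1. The three bounds follow, using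
ψ² = 1 + ψ for the lower one and c (4 + ψ) = 2 for the upper one, which is attained at n = 2.
-/

open Real

section PowBounds

variable {r : ℝ} {k m : ℕ}

lemma pow_le_pow_of_abs_le_one_of_even (hr : |r| ≤ 1) (hk : Even k) (hkm : k ≤ m) :
    r ^ m ≤ r ^ k :=
  calc r ^ m ≤ |r| ^ m := by rw [← abs_pow]; exact le_abs_self _
    _ ≤ |r| ^ k := pow_le_pow_of_le_one (abs_nonneg r) hr hkm
    _ = r ^ k := hk.pow_abs r

lemma pow_le_pow_of_nonpos_of_odd (hr0 : r ≤ 0) (hr1 : -1 ≤ r) (hk : Odd k) (hkm : k ≤ m) :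
    r ^ k ≤ r ^ m := by
  have hr : |r| ≤ 1 := abs_le.mpr ⟨hr1, by linarith⟩
  calc r ^ k = -|r| ^ k := by rw [abs_of_nonpos hr0, hk.neg_pow, neg_neg]
    _ ≤ -|r| ^ m := neg_le_neg (pow_le_pow_of_le_one (abs_nonneg r) hr hkm)
    _ ≤ r ^ m := by rw [← abs_pow]; exact neg_abs_le _

lemma pow_three_le_pow_of_nonpos (hr0 : r ≤ 0) (hr1 : -1 ≤ r) (hm : 2 ≤ m) : r ^ 3 ≤ r ^ m := by
  rcases m.even_or_odd with he | ho
  · exact (Odd.pow_nonpos (by decide) hr0).trans (he.pow_nonneg r)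
  · have : 3 ≤ m := by obtain ⟨j, rfl⟩ := ho; omega
    exact pow_le_pow_of_nonpos_of_odd hr0 hr1 (by decide) this

end PowBounds

lemma eq_add_mul_sub_pow_of_succ {R : Type*} [CommRing R] (y : ℕ → R) (a r : R)
    (hstep : ∀ n, 1 ≤ n → y (n + 1) = y n + a * (1 - r) * r ^ n) :
    ∀ n, 1 ≤ n → y n = y 1 + a * (r - r ^ n) := by
  intro n hn
  induction n, hn using Nat.le_induction with
  | base => ring
  | succ k hk ih => rw [hstep k hk, ih]; ring

lemma φ_eq_goldenRatio : φ = goldenRatio := rfl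

lemma neg_one_pow_mul_goldenRatio_zpow_one_sub (n : ℕ) :
    (-1 : ℝ) ^ n * goldenRatio ^ ((1 : ℤ) - n) = (1 - goldenConj) * goldenConj ^ n := by
  rw [zpow_sub₀ goldenRatio_ne_zero, zpow_one, zpow_natCast, div_eq_mul_inv, ← inv_pow,
    inv_goldenRatio, one_sub_goldenRatio, mul_left_comm, ← mul_pow, neg_one_mul, neg_neg]

lemma goldenConj_pow_three : goldenConj ^ 3 = 2 * goldenConj + 1 := by
  linear_combination (goldenConj + 1) * goldenConj_sq

lemma c_pos : 0 < c :=
  div_pos (by norm_num) (by nlinarith [sq_sqrt (show (0 : ℝ) ≤ 5 by norm_num), sqrt_nonneg 5])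

lemma c_mul_four_add_goldenConj : c * (4 + goldenConj) = 2 := by
  have h : (9 : ℝ) - √5 ≠ 0 := by
    nlinarith [sq_sqrt (show (0 : ℝ) ≤ 5 by norm_num), sqrt_nonneg 5]
  rw [c, goldenConj]
  field_simp
  ring

theorem stmt9_general (y : ℕ → ℝ) (h1 : y 1 = c)
    (hrec : ∀ n : ℕ, 1 ≤ n →
      2 * y (n + 1) = 2 * y n + c * (-1 : ℝ) ^ n * φ ^ ((1 : ℤ) - (n : ℤ)))
    (n : ℕ) (hn : 1 ≤ n) :
    y n ≤ c ∧ y (n + 1) ∈ Set.Icc (c / 2) ((5 * c - 2) / 2) := by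
  have hstep : ∀ k, 1 ≤ k → y (k + 1) = y k + c / 2 * (1 - goldenConj) * goldenConj ^ k := by
    intro k hk
    have hk_rec := hrec k hk
    rw [φ_eq_goldenRatio, mul_assoc, neg_one_pow_mul_goldenRatio_zpow_one_sub] at hk_rec
    linarith
  have hy : ∀ m, 1 ≤ m → y m = c + c / 2 * (goldenConj - goldenConj ^ m) := by
    simpa only [h1] using eq_add_mul_sub_pow_of_succ y _ _ hstep
  have hψ0 := goldenConj_neg.le
  have hψ1 := neg_one_lt_goldenConj.le
  have hψ_le : goldenConj ≤ goldenConj ^ n := by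
    simpa using pow_le_pow_of_nonpos_of_odd hψ0 hψ1 odd_one hn
  have hle_sq : goldenConj ^ (n + 1) ≤ goldenConj ^ 2 :=
    pow_le_pow_of_abs_le_one_of_even (abs_le.mpr ⟨hψ1, by linarith⟩) even_two (by omega)
  have hcube_le : goldenConj ^ 3 ≤ goldenConj ^ (n + 1) :=
    pow_three_le_pow_of_nonpos hψ0 hψ1 (by omega)
  have hc := c_pos.le
  rw [hy n hn, hy (n + 1) (by omega)]
  refine ⟨?_, ?_, ?_⟩
  · linarith [mul_le_mul_of_nonneg_left hψ_le hc]
  · linear_combination (c / 2) * hle_sq + (c / 2) * goldenConj_sq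
  · linarith [mul_le_mul_of_nonneg_left hcube_le hc, congrArg (c * ·) goldenConj_pow_three,
      c_mul_four_add_goldenConj]

theorem stmt9 (y : ℕ → ℝ) (h1 : y 1 = c) (h2 : y 2 = c / 2)
    (hrec : ∀ n : ℕ, 1 ≤ n →
      2 * y (n + 1) = 2 * y n + c * (-1 : ℝ) ^ n * φ ^ ((1 : ℤ) - (n : ℤ)))
    (n : ℕ) (hn : 1 ≤ n) :
    y n ≤ c ∧ y (n + 1) ∈ Set.Icc (c / 2) ((5 * c - 2) / 2) :=
  stmt9_general y h1 hrec n hn
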